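/- arXiv:1803.07234 — 2 statements merged into one kernel-verified Lean document; each statement's English description precedes it below -/
import Mathlib

section
/- For any monoid M and subset A ⊆ M, if θ_A (defined by (a,b) ∈ θ_A iff ∀ c, a·c ∈ A ↔ b·c ∈ A) has finitely many classes, then the syntactic congruence θ'_A also has finitely many classes. -/
/-- The relation θ_A : a θ b iff ∀ c, a*c ∈ A ↔ b*c ∈ A. -/
def thetaSetoid {M : Type*} [Monoid M] (A : Set M) : Setoid M where
  r a b := ∀ c, a * c ∈ A ↔ b * c ∈ A
  iseqv := ⟨fun _ _ => Iff.rfl, fun h c => (h c).symm, fun h g c => (h c).trans (g c)⟩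
/-- The syntactic relation θ'_A : a θ' b iff ∀ c₁ c₂, c₁*a*c₂ ∈ A ↔ c₁*b*c₂ ∈ A. -/
def synSetoid {M : Type*} [Monoid M] (A : Set M) : Setoid M where
  r a b := ∀ c₁ c₂, c₁ * a * c₂ ∈ A ↔ c₁ * b * c₂ ∈ A
  iseqv := ⟨fun _ _ _ => Iff.rfl, fun h c₁ c₂ => (h c₁ c₂).symm,
    fun h g c₁ c₂ => (h c₁ c₂).trans (g c₁ c₂)⟩

/-- Right multiplication descends to the θ-quotient. -/
def thetaRightMul {M : Type*} [Monoid M] (A : Set M) (a : M) :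
    Quotient (thetaSetoid A) → Quotient (thetaSetoid A) :=
  Quotient.map (· * a) (fun c₁ c₁' (hc : ∀ c, c₁ * c ∈ A ↔ c₁' * c ∈ A) c => by
    simpa [mul_assoc] using hc (a * c))

theorem finite_syn_classes_of_finite_theta_classes {M : Type*} [Monoid M] (A : Set M)
    (h : Finite (Quotient (thetaSetoid A))) :
    Finite (Quotient (synSetoid A)) := by
  have : Finite (Quotient (thetaSetoid A) → Quotient (thetaSetoid A)) := by infer_instance
  apply Finite.of_injective
    (fun q : Quotient (synSetoid A) =>
      Quotient.lift (thetaRightMul A) (fun a b (hab : ∀ c₁ c₂, c₁ * a * c₂ ∈ A ↔ c₁ * b * c₂ ∈ A) => by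
        funext x
        induction x using Quotient.inductionOn with
        | h c₁ =>
          exact Quotient.sound (fun c₂ => hab c₁ c₂)) q)
  intro q₁ q₂ hq
  induction q₁ using Quotient.inductionOn with
  | h a =>
  induction q₂ using Quotient.inductionOn with
  | h b =>
  apply Quotient.sound
  intro c₁ c₂
  have := congrFun hq ⟦c₁⟧
  simp only [Quotient.lift_mk, thetaRightMul, Quotient.map_mk] at this
  exact Quotient.exact this c₂
end

section
/- Let M be a monoid and A ⊆ M, and define for each a ∈ M the 'row' function r_a : M → Prop by r_a(c) = (a·c ∈ A). Then A is recognizable if and only if the set {r_a : a ∈ M} of row functions is finite. -/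
structure RecogWitness (M : Type*) [Monoid M] (A : Set M) where
  F : Type
  [instMonoid : Monoid F]
  [instFinite : Finite F]
  α : M →* F
  fibres : A = ⇑α ⁻¹' (⇑α '' A)

/-- `A` is recognizable: a union of fibres of a monoid hom into a finite monoid. -/
def Recognizable {M : Type*} [Monoid M] (A : Set M) : Prop :=
  Nonempty (RecogWitness M A)

/-!
If `A` is the preimage of a subset of a finite monoid under `α`, then the row `r_a` depends only
on `α a`, so there are finitely many rows. Conversely, `M` acts on the right of the rows by
`r_a ↦ r_a ∘ (m * ·) = r_{a m}`; this gives a homomorphism from `M` to the (opposite of the)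
finite monoid of self-maps of the set of rows, and `a ∈ A` is read off from the image of `r_1`
evaluated at `1`.
-/

section Rows

variable {M : Type*} [Monoid M]

/-- The finite monoid may live in any universe: it is shrunk to `Type`. -/
theorem Recognizable.of_eq_preimage {A : Set M} {F : Type*} [Monoid F] [Finite F] (α : M →* F)
    (S : Set F) (hA : A = α ⁻¹' S) : Recognizable A := by
  let β : M →* Shrink.{0} F := (Shrink.mulEquiv : Shrink.{0} F ≃* F).symm.toMonoidHom.comp α
  have hA' : A = β ⁻¹' (Shrink.mulEquiv ⁻¹' S) := by
    simp [β, hA, Set.preimage_preimage]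
  exact ⟨⟨Shrink.{0} F, β, by rw [hA', Set.preimage_image_preimage]⟩⟩

def row (A : Set M) (a : M) : M → Prop := fun c => a * c ∈ A

theorem row_mul (A : Set M) (a m : M) : row A (a * m) = row A a ∘ (m * ·) := by
  funext c
  simp [row, mul_assoc]

theorem finite_range_row_preimage {F : Type*} [Monoid F] [Finite F] (α : M →* F) (S : Set F) :
    (Set.range (row (α ⁻¹' S))).Finite := by
  refine (Set.finite_range fun f c => f * α c ∈ S).subset ?_
  rintro _ ⟨a, rfl⟩
  exact ⟨α a, by funext c; simp [row]⟩

theorem Recognizable.finite_range_row {A : Set M} (hA : Recognizable A) :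
    (Set.range (row A)).Finite := by
  obtain ⟨⟨F, α, hfibres⟩⟩ := hA
  rw [hfibres]
  exact finite_range_row_preimage α _

theorem comp_mul_mem_range_row {A : Set M} {f : M → Prop} (hf : f ∈ Set.range (row A)) (m : M) :
    f ∘ (m * ·) ∈ Set.range (row A) := by
  obtain ⟨a, rfl⟩ := hf
  exact ⟨a * m, row_mul A a m⟩

def rowShift (A : Set M) (m : M) : Function.End (Set.range (row A)) :=
  fun f => ⟨f.1 ∘ (m * ·), comp_mul_mem_range_row f.2 m⟩

instance {α : Type*} [Finite α] : Finite (Function.End α)ᵐᵒᵖ :=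
  Finite.of_equiv (α → α) MulOpposite.opEquiv

def rowAction (A : Set M) : M →* (Function.End (Set.range (row A)))ᵐᵒᵖ where
  toFun m := .op (rowShift A m)
  map_one' := MulOpposite.unop_injective <| funext fun f =>
    Subtype.ext <| funext fun c => congrArg f.1 (one_mul c)
  map_mul' m n := MulOpposite.unop_injective <| funext fun f =>
    Subtype.ext <| funext fun c => congrArg f.1 (mul_assoc m n c)

theorem eq_preimage_rowAction (A : Set M) :
    A = rowAction A ⁻¹' {φ | (φ.unop ⟨row A 1, 1, rfl⟩).1 1} := by
  ext a
  simp [rowAction, rowShift, row]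

end Rows

theorem recognizable_iff_finitely_many_rows {M : Type*} [Monoid M] (A : Set M) :
    Recognizable A ↔ (Set.range fun a : M => fun c : M => a * c ∈ A).Finite := by
  refine ⟨Recognizable.finite_range_row, fun hfin => ?_⟩
  have : Finite (Set.range (row A)) := hfin.to_subtype
  exact .of_eq_preimage (rowAction A) _ (eq_preimage_rowAction A)
end
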